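/- arXiv:2509.18232 — 5 statements merged into one kernel-verified Lean document; each statement's English description precedes it below -/
import Mathlib

section
/- The concatenation operation ⊙ on normalized regular expressions is associative: for all normalized regular expressions E₁, E₂, E₃, (E₁ ⊙ E₂) ⊙ E₃ = E₁ ⊙ (E₂ ⊙ E₃) (syntactic equality). -/
/-- Normalized regular expression syntax trees over alphabet `ℕ`. -/
inductive NE : Type where
  | zero : NE
  | one : NE
  | letter : ℕ → NE
  | union : List NE → NE
  | cat : NE → NE → NE
  | star : NE → NE

namespace NE

def isUnion : NE → Prop
  | union _ => True
  | _ => False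

def isCat : NE → Prop
  | cat _ _ => True
  | _ => False

def isStar : NE → Prop
  | star _ => True
  | _ => False

/-- Well-formedness of normalized expressions w.r.t. a fixed total order `lt`. -/
inductive Norm (lt : NE → NE → Prop) : NE → Prop where
  | zero : Norm lt zero
  | one : Norm lt one
  | letter (n : ℕ) : Norm lt (letter n)
  | union (es : List NE) (hlen : 2 ≤ es.length)
      (hmem : ∀ e ∈ es, Norm lt e)
      (hshape : ∀ e ∈ es, ¬ e.isUnion ∧ e ≠ zero)
      (hsorted : es.Chain' lt) : Norm lt (union es)
  | cat (e₁ e₂ : NE) (h₁ : Norm lt e₁) (h₂ : Norm lt e₂)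
      (hz₁ : e₁ ≠ zero) (ho₁ : e₁ ≠ one) (hz₂ : e₂ ≠ zero) (ho₂ : e₂ ≠ one)
      (hc : ¬ e₁.isCat) : Norm lt (cat e₁ e₂)
  | star (e : NE) (h : Norm lt e) (hz : e ≠ zero) (ho : e ≠ one)
      (hs : ¬ e.isStar) : Norm lt (star e)

/-- Top-level summands: none for `0`, the list for a union, a singleton otherwise. -/
def summands : NE → List NE
  | zero => []
  | union es => es
  | e => [e]

/-- Insert into a strictly sorted list, dropping duplicates. -/
def insertSorted (lt : NE → NE → Prop) [DecidableRel lt] (a : NE) : List NE → List NE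
  | [] => [a]
  | b :: l => if lt a b then a :: b :: l
              else if lt b a then b :: insertSorted lt a l
              else b :: l

/-- Sort and de-duplicate a list of expressions. -/
def sortDedup (lt : NE → NE → Prop) [DecidableRel lt] : List NE → List NE
  | [] => []
  | a :: l => insertSorted lt a (sortDedup lt l)

/-- Rebuild a normalized expression from a list of summands. -/
def ofSummands : List NE → NE
  | [] => zero
  | [e] => e
  | es => union es

/-- The operation ⊕ of the paper. -/
def nunion (lt : NE → NE → Prop) [DecidableRel lt] (e₁ e₂ : NE) : NE :=
  ofSummands (sortDedup lt (summands e₁ ++ summands e₂))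

/-- The operation ⊙ of the paper. -/
def ncat : NE → NE → NE
  | zero, _ => zero
  | _, zero => zero
  | one, e => e
  | e, one => e
  | cat f₁ f₂, e₂ => cat f₁ (ncat f₂ e₂)
  | e₁, e₂ => cat e₁ e₂

/-- The operation `iter` of the paper. -/
def niter : NE → NE
  | zero => one
  | one => one
  | star e => star e
  | e => star e

/-- The language denoted by a normalized expression (union = sum of languages). -/
def lang : NE → Language ℕ
  | zero => 0
  | one => 1
  | letter n => {[n]}
  | union es => es.attach.foldr (fun e acc => lang e.1 + acc) 0
  | cat e₁ e₂ => lang e₁ * lang e₂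
  | star e => KStar.kstar (lang e)
decreasing_by
  all_goals simp_wf
  · have := List.sizeOf_lt_of_mem e.2
    omega
  all_goals omega

end NE

theorem ncat_assoc_aux (E₁ E₂ E₃ : NE) :
    NE.ncat (NE.ncat E₁ E₂) E₃ = NE.ncat E₁ (NE.ncat E₂ E₃) := by
  cases E₁ with
  | cat f₁ f₂ =>
    have ih := fun a b => ncat_assoc_aux f₂ a b
    cases E₂ <;> cases E₃ <;> simp [NE.ncat, ih]
  | zero => cases E₂ <;> cases E₃ <;> simp [NE.ncat]
  | one => cases E₂ <;> cases E₃ <;> simp [NE.ncat]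
  | letter n => cases E₂ <;> cases E₃ <;> simp [NE.ncat]
  | union es => cases E₂ <;> cases E₃ <;> simp [NE.ncat]
  | star e => cases E₂ <;> cases E₃ <;> simp [NE.ncat]
termination_by sizeOf E₁
decreasing_by simp_wf

theorem ncat_assoc (lt : NE → NE → Prop) [DecidableRel lt] [IsStrictTotalOrder NE lt]
    (E₁ E₂ E₃ : NE) (h₁ : NE.Norm lt E₁) (h₂ : NE.Norm lt E₂) (h₃ : NE.Norm lt E₃) :
    NE.ncat (NE.ncat E₁ E₂) E₃ = NE.ncat E₁ (NE.ncat E₂ E₃) :=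
  ncat_assoc_aux E₁ E₂ E₃
end

section
/- For all normalized regular expressions E₁ and E₂, the language of their union operation equals the union of their languages: L(E₁ ⊕ E₂) = L(E₁) ∪ L(E₂). -/
namespace NE

def langSum (l : List NE) : Language ℕ := l.foldr (fun e acc => lang e + acc) 0

theorem lang_add_self (l : Language ℕ) : l + l = l := sup_idem l

theorem attach_foldr (es : List NE) :
    es.attach.foldr (fun e acc => lang e.1 + acc) 0 = langSum es := by
  induction es with
  | nil => rfl
  | cons a l ih =>
    rw [List.attach_cons, List.foldr_cons, List.foldr_map]
    show _ = lang a + langSum l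
    rw [← ih]

theorem lang_union (es : List NE) : lang (union es) = langSum es := by
  rw [lang]; exact attach_foldr es

theorem langSum_append (l₁ l₂ : List NE) :
    langSum (l₁ ++ l₂) = langSum l₁ + langSum l₂ := by
  induction l₁ with
  | nil => simp [langSum]
  | cons a l ih => simp [langSum, List.foldr_cons] at *; rw [ih, add_assoc]

theorem langSum_ofSummands (l : List NE) : lang (ofSummands l) = langSum l := by
  match l with
  | [] => simp [ofSummands, langSum, lang]
  | [e] => simp [ofSummands, langSum]
  | a :: b :: l => exact lang_union (a :: b :: l)

theorem langSum_insertSorted (lt : NE → NE → Prop) [DecidableRel lt]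
    [IsStrictTotalOrder NE lt] (a : NE) (l : List NE) :
    langSum (insertSorted lt a l) = lang a + langSum l := by
  induction l with
  | nil => simp [insertSorted, langSum]
  | cons b l ih =>
    rw [insertSorted]
    by_cases h1 : lt a b
    · rw [if_pos h1]; rfl
    · by_cases h2 : lt b a
      · simp only [h1, h2, if_true, if_false]
        show lang b + langSum (insertSorted lt a l) = lang a + (lang b + langSum l)
        rw [ih, ← add_assoc, ← add_assoc, add_comm (lang b) (lang a)]
      · have hab : a = b := by
          rcases trichotomous_of lt a b with h | h | h
          · exact absurd h h1
          · exact h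
          · exact absurd h h2
        simp only [h1, h2, if_false]
        show lang b + langSum l = lang a + (lang b + langSum l)
        rw [hab, ← add_assoc, lang_add_self]

theorem langSum_sortDedup (lt : NE → NE → Prop) [DecidableRel lt]
    [IsStrictTotalOrder NE lt] (l : List NE) :
    langSum (sortDedup lt l) = langSum l := by
  induction l with
  | nil => rfl
  | cons a l ih =>
    rw [sortDedup, langSum_insertSorted, ih]; rfl

theorem langSum_summands (e : NE) : langSum (summands e) = lang e := by
  match e with
  | zero => simp [summands, langSum, lang]
  | one => simp [summands, langSum]
  | letter n => simp [summands, langSum]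
  | union es => rw [summands, lang_union]
  | cat e₁ e₂ => simp [summands, langSum]
  | star e => simp [summands, langSum]

end NE

/-- In `Language`, `+` is union of languages. -/
theorem lang_nunion (lt : NE → NE → Prop) [DecidableRel lt] [IsStrictTotalOrder NE lt]
    (E₁ E₂ : NE) (h₁ : NE.Norm lt E₁) (h₂ : NE.Norm lt E₂) :
    NE.lang (NE.nunion lt E₁ E₂) = NE.lang E₁ + NE.lang E₂ := by
  rw [NE.nunion, NE.langSum_ofSummands, NE.langSum_sortDedup, NE.langSum_append,
    NE.langSum_summands, NE.langSum_summands]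
end

section
/- For all normalized regular expressions E₁ and E₂, the language of their concatenation operation equals the concatenation of their languages: L(E₁ ⊙ E₂) = L(E₁) · L(E₂). -/
namespace NE

theorem lang_ncat_aux : ∀ e₁ e₂ : NE, lang (ncat e₁ e₂) = lang e₁ * lang e₂
  | zero, e₂ => by simp [ncat, lang]
  | one, zero => by simp [ncat, lang]
  | letter _, zero => by simp [ncat, lang]
  | union _, zero => by simp [ncat, lang]
  | cat _ _, zero => by simp [ncat, lang, lang_ncat_aux]
  | star _, zero => by simp [ncat, lang]
  | one, e₂ => by cases e₂ <;> simp [ncat, lang]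
  | letter _, e₂ => by cases e₂ <;> simp [ncat, lang]
  | union _, e₂ => by cases e₂ <;> simp [ncat, lang]
  | star _, e₂ => by cases e₂ <;> simp [ncat, lang]
  | cat f₁ f₂, e₂ => by
      cases e₂ <;> simp [ncat, lang, lang_ncat_aux f₂, mul_assoc]

end NE

/-- In `Language`, `*` is concatenation of languages. -/
theorem lang_ncat (lt : NE → NE → Prop) [DecidableRel lt] [IsStrictTotalOrder NE lt]
    (E₁ E₂ : NE) (h₁ : NE.Norm lt E₁) (h₂ : NE.Norm lt E₂) :
    NE.lang (NE.ncat E₁ E₂) = NE.lang E₁ * NE.lang E₂ := by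
  exact NE.lang_ncat_aux E₁ E₂
end

section
/- Plain regular expressions that are equivalent with respect to the congruence ≅ normalize to the same normalized expression: if E₁ ≅ E₂ then the normalization of E₁ is syntactically equal to the normalization of E₂. -/
/-- Normalization of plain regular expressions into normalized expressions. -/
def normRE (lt : NE → NE → Prop) [DecidableRel lt] : RegularExpression ℕ → NE
  | .zero => .zero
  | .epsilon => .one
  | .char n => .letter n
  | .plus a b => NE.nunion lt (normRE lt a) (normRE lt b)
  | .comp a b => NE.ncat (normRE lt a) (normRE lt b)
  | .star a => NE.niter (normRE lt a)

/-- The least congruence ≅ on plain regular expressions of Definition 3 of the paper. -/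
inductive Cong : RegularExpression ℕ → RegularExpression ℕ → Prop where
  | refl (e : RegularExpression ℕ) : Cong e e
  | symm {a b} : Cong a b → Cong b a
  | trans {a b c} : Cong a b → Cong b c → Cong a c
  | plus_congr {a b c d} : Cong a b → Cong c d → Cong (a.plus c) (b.plus d)
  | comp_congr {a b c d} : Cong a b → Cong c d → Cong (a.comp c) (b.comp d)
  | star_congr {a b} : Cong a b → Cong a.star b.star
  | plus_idem (e : RegularExpression ℕ) : Cong (e.plus e) e
  | zero_plus (e : RegularExpression ℕ) : Cong (RegularExpression.plus 0 e) e
  | plus_zero (e : RegularExpression ℕ) : Cong (e.plus 0) e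
  | zero_comp (e : RegularExpression ℕ) : Cong (RegularExpression.comp 0 e) 0
  | comp_zero (e : RegularExpression ℕ) : Cong (e.comp 0) 0
  | one_comp (e : RegularExpression ℕ) : Cong (RegularExpression.comp 1 e) e
  | comp_one (e : RegularExpression ℕ) : Cong (e.comp 1) e
  | plus_assoc (a b c : RegularExpression ℕ) : Cong (a.plus (b.plus c)) ((a.plus b).plus c)
  | plus_comm (a b : RegularExpression ℕ) : Cong (a.plus b) (b.plus a)
  | comp_assoc (a b c : RegularExpression ℕ) : Cong (a.comp (b.comp c)) ((a.comp b).comp c)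
  | zero_star : Cong (RegularExpression.star 0) 1
  | one_star : Cong (RegularExpression.star 1) 1
  | star_star (e : RegularExpression ℕ) : Cong e.star.star e.star

/-!
Normalization is compositional, so it suffices that each axiom of ≅ becomes an identity between
the normalized operations on normal forms. For ⊙ and `iter` these hold by computation (⊙ is
associative because it right-associates concatenations). ⊕ only sees the set of top-level summands
of its arguments, and a strictly sorted list is determined by its elements; so ⊕ is associative,
commutative and idempotent with unit `0` on every expression rebuilt from its sorted list of
summands, and normalization produces only such expressions.
-/

namespace NE

section SortDedup

variable (lt : NE → NE → Prop) [DecidableRel lt]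

theorem mem_insertSorted [Std.Trichotomous lt] (a x : NE) (l : List NE) :
    x ∈ insertSorted lt a l ↔ x = a ∨ x ∈ l := by
  induction l with
  | nil => simp [insertSorted]
  | cons b l ih =>
    unfold insertSorted
    split_ifs with hab hba
    · simp
    · simp only [List.mem_cons, ih]
      tauto
    · obtain rfl := Std.Trichotomous.trichotomous a b hab hba
      simp

theorem pairwise_insertSorted [Std.Trichotomous lt] [IsTrans NE lt] (a : NE) {l : List NE}
    (hl : l.Pairwise lt) : (insertSorted lt a l).Pairwise lt := by
  induction l with
  | nil => simp [insertSorted]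
  | cons b l ih =>
    rw [List.pairwise_cons] at hl
    unfold insertSorted
    split_ifs with hab hba
    · refine List.pairwise_cons.2 ⟨fun y hy => ?_, List.pairwise_cons.2 hl⟩
      rcases List.mem_cons.1 hy with rfl | hy
      exacts [hab, _root_.trans hab (hl.1 y hy)]
    · refine List.pairwise_cons.2 ⟨fun y hy => ?_, ih hl.2⟩
      rcases (mem_insertSorted lt a y l).1 hy with rfl | hy
      exacts [hba, hl.1 y hy]
    · exact List.pairwise_cons.2 hl

theorem mem_sortDedup [Std.Trichotomous lt] (x : NE) (l : List NE) :
    x ∈ sortDedup lt l ↔ x ∈ l := by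
  induction l with
  | nil => simp [sortDedup]
  | cons a l ih => simp [sortDedup, mem_insertSorted, ih]

theorem pairwise_sortDedup [Std.Trichotomous lt] [IsTrans NE lt] (l : List NE) :
    (sortDedup lt l).Pairwise lt := by
  induction l with
  | nil => simp [sortDedup]
  | cons a l ih => exact pairwise_insertSorted lt a ih

theorem sortDedup_eq_of_mem_iff [IsStrictTotalOrder NE lt] {l l' : List NE}
    (hl : l.Pairwise lt) (h : ∀ x, x ∈ l' ↔ x ∈ l) : sortDedup lt l' = l :=
  haveI := Std.Asymm.antisymm lt
  (pairwise_sortDedup lt l').eq_of_mem_iff hl fun x => (mem_sortDedup lt x l').trans (h x)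

theorem sortDedup_congr [IsStrictTotalOrder NE lt] {l₁ l₂ : List NE}
    (h : ∀ x, x ∈ l₁ ↔ x ∈ l₂) : sortDedup lt l₁ = sortDedup lt l₂ :=
  sortDedup_eq_of_mem_iff lt (pairwise_sortDedup lt l₂) fun x =>
    (h x).trans (mem_sortDedup lt x l₂).symm

end SortDedup

@[simp] theorem zero_ncat (e : NE) : ncat zero e = zero := by cases e <;> rfl

@[simp] theorem ncat_zero (e : NE) : ncat e zero = zero := by cases e <;> rfl

@[simp] theorem one_ncat (e : NE) : ncat one e = e := by cases e <;> rfl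

@[simp] theorem ncat_one (e : NE) : ncat e one = e := by cases e <;> rfl

theorem isCat.ne_zero {e : NE} (h : e.isCat) : e ≠ zero := by
  rintro rfl
  exact h

theorem isCat.ne_one {e : NE} (h : e.isCat) : e ≠ one := by
  rintro rfl
  exact h

theorem isCat.not_isUnion {e : NE} (h : e.isCat) : ¬ e.isUnion := by
  cases e <;> simp_all [isCat, isUnion]

theorem cat_ncat (f₁ f₂ : NE) {e : NE} (hz : e ≠ zero) (ho : e ≠ one) :
    ncat (cat f₁ f₂) e = cat f₁ (ncat f₂ e) := by
  cases e <;> simp_all [ncat]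

theorem ncat_of_not_isCat {a e : NE} (hc : ¬ a.isCat) (ha₀ : a ≠ zero) (ha₁ : a ≠ one)
    (he₀ : e ≠ zero) (he₁ : e ≠ one) : ncat a e = cat a e := by
  cases a <;> cases e <;> simp_all [ncat, isCat]

theorem isCat_ncat {a b : NE} (ha₀ : a ≠ zero) (ha₁ : a ≠ one) (hb₀ : b ≠ zero)
    (hb₁ : b ≠ one) : (ncat a b).isCat := by
  by_cases hc : a.isCat
  · cases a <;> simp_all [isCat, cat_ncat]
  · simp [ncat_of_not_isCat hc ha₀ ha₁ hb₀ hb₁, isCat]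

theorem ncat_assoc_of_ne {b c : NE} (hb₀ : b ≠ zero) (hb₁ : b ≠ one) (hc₀ : c ≠ zero)
    (hc₁ : c ≠ one) (a : NE) : ncat (ncat a b) c = ncat a (ncat b c) := by
  have hbc : (ncat b c).isCat := isCat_ncat hb₀ hb₁ hc₀ hc₁
  cases a
  case zero => simp
  case one => simp
  case cat f₁ f₂ =>
    rw [cat_ncat _ _ hb₀ hb₁, cat_ncat _ _ hc₀ hc₁, ncat_assoc_of_ne hb₀ hb₁ hc₀ hc₁ f₂,
      cat_ncat _ _ hbc.ne_zero hbc.ne_one]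
  all_goals
    rw [ncat_of_not_isCat (e := b) (by simp [isCat]) (by simp) (by simp) hb₀ hb₁,
      cat_ncat _ _ hc₀ hc₁,
      ncat_of_not_isCat (e := ncat b c) (by simp [isCat]) (by simp) (by simp) hbc.ne_zero
        hbc.ne_one]

theorem ncat_assoc (a b c : NE) : ncat (ncat a b) c = ncat a (ncat b c) := by
  rcases eq_or_ne b zero with rfl | hb₀
  · simp
  rcases eq_or_ne c zero with rfl | hc₀
  · simp
  rcases eq_or_ne b one with rfl | hb₁
  · simp
  rcases eq_or_ne c one with rfl | hc₁
  · simp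
  exact ncat_assoc_of_ne hb₀ hb₁ hc₀ hc₁ a

theorem niter_niter (e : NE) : niter (niter e) = niter e := by
  cases e <;> rfl

theorem summands_of_not_isUnion {e : NE} (hu : ¬ e.isUnion) (hz : e ≠ zero) :
    summands e = [e] := by
  cases e <;> simp_all [summands, isUnion]

theorem summands_ofSummands {l : List NE} (h : ∀ f ∈ l, ¬ f.isUnion ∧ f ≠ zero) :
    summands (ofSummands l) = l := by
  rcases l with _ | ⟨a, _ | ⟨b, l⟩⟩
  · rfl
  · have ha := h a (List.mem_singleton_self a)
    exact summands_of_not_isUnion ha.1 ha.2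
  · rfl

/-- Much weaker than `Norm lt`: only the top-level summands are constrained, and that is all
⊕ looks at. -/
structure IsSortedSum (lt : NE → NE → Prop) (e : NE) : Prop where
  summand_shape : ∀ f ∈ e.summands, ¬ f.isUnion ∧ f ≠ zero
  pairwise_summands : e.summands.Pairwise lt
  ofSummands_summands : ofSummands e.summands = e

section IsSortedSum

variable {lt : NE → NE → Prop}

theorem isSortedSum_zero : IsSortedSum lt zero :=
  ⟨by simp [summands], by simp [summands], rfl⟩

theorem isSortedSum_of_not_isUnion {e : NE} (hu : ¬ e.isUnion) (hz : e ≠ zero) :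
    IsSortedSum lt e := by
  refine ⟨?_, ?_, ?_⟩ <;> rw [summands_of_not_isUnion hu hz]
  · simpa using ⟨hu, hz⟩
  · exact List.pairwise_singleton lt e
  · rfl

theorem isSortedSum_ofSummands {l : List NE} (h : ∀ f ∈ l, ¬ f.isUnion ∧ f ≠ zero)
    (hl : l.Pairwise lt) : IsSortedSum lt (ofSummands l) := by
  rcases l with _ | ⟨a, _ | ⟨b, l⟩⟩
  · exact isSortedSum_zero
  · have ha := h a (List.mem_singleton_self a)
    exact isSortedSum_of_not_isUnion ha.1 ha.2
  · exact ⟨h, hl, rfl⟩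

theorem isSortedSum_ncat {a b : NE} (ha : IsSortedSum lt a) (hb : IsSortedSum lt b) :
    IsSortedSum lt (ncat a b) := by
  rcases eq_or_ne a zero with rfl | ha₀
  · simpa using isSortedSum_zero
  rcases eq_or_ne b zero with rfl | hb₀
  · simpa using isSortedSum_zero
  rcases eq_or_ne a one with rfl | ha₁
  · simpa
  rcases eq_or_ne b one with rfl | hb₁
  · simpa
  have hab := isCat_ncat ha₀ ha₁ hb₀ hb₁
  exact isSortedSum_of_not_isUnion hab.not_isUnion hab.ne_zero

theorem isSortedSum_niter (e : NE) : IsSortedSum lt (niter e) := by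
  cases e <;> exact isSortedSum_of_not_isUnion (by simp [niter, isUnion]) (by simp [niter])

variable [DecidableRel lt]

theorem summand_shape_sortDedup_append [Std.Trichotomous lt] {e₁ e₂ : NE}
    (h₁ : IsSortedSum lt e₁) (h₂ : IsSortedSum lt e₂) :
    ∀ f ∈ sortDedup lt (e₁.summands ++ e₂.summands), ¬ f.isUnion ∧ f ≠ zero := by
  intro f hf
  rcases List.mem_append.1 ((mem_sortDedup lt f _).1 hf) with hf | hf
  exacts [h₁.summand_shape f hf, h₂.summand_shape f hf]

variable [IsStrictTotalOrder NE lt]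

theorem summands_nunion {e₁ e₂ : NE} (h₁ : IsSortedSum lt e₁) (h₂ : IsSortedSum lt e₂) :
    summands (nunion lt e₁ e₂) = sortDedup lt (e₁.summands ++ e₂.summands) :=
  summands_ofSummands (summand_shape_sortDedup_append h₁ h₂)

theorem isSortedSum_nunion {e₁ e₂ : NE} (h₁ : IsSortedSum lt e₁) (h₂ : IsSortedSum lt e₂) :
    IsSortedSum lt (nunion lt e₁ e₂) :=
  isSortedSum_ofSummands (summand_shape_sortDedup_append h₁ h₂) (pairwise_sortDedup lt _)

theorem nunion_self {e : NE} (h : IsSortedSum lt e) : nunion lt e e = e := by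
  unfold nunion
  rw [sortDedup_eq_of_mem_iff lt h.pairwise_summands (by simp), h.ofSummands_summands]

theorem zero_nunion {e : NE} (h : IsSortedSum lt e) : nunion lt zero e = e := by
  unfold nunion
  rw [sortDedup_eq_of_mem_iff lt h.pairwise_summands (by simp [summands]),
    h.ofSummands_summands]

theorem nunion_comm (e₁ e₂ : NE) : nunion lt e₁ e₂ = nunion lt e₂ e₁ :=
  congrArg ofSummands <| sortDedup_congr lt fun x => by simp only [List.mem_append, or_comm]

theorem nunion_zero {e : NE} (h : IsSortedSum lt e) : nunion lt e zero = e :=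
  (nunion_comm e zero).trans (zero_nunion h)

theorem nunion_assoc {a b c : NE} (ha : IsSortedSum lt a) (hb : IsSortedSum lt b)
    (hc : IsSortedSum lt c) : nunion lt a (nunion lt b c) = nunion lt (nunion lt a b) c :=
  congrArg ofSummands <| sortDedup_congr lt fun x => by
    simp only [List.mem_append, summands_nunion ha hb, summands_nunion hb hc, mem_sortDedup,
      or_assoc]

end IsSortedSum

end NE

open NE

theorem isSortedSum_normRE (lt : NE → NE → Prop) [DecidableRel lt] [IsStrictTotalOrder NE lt]
    (E : RegularExpression ℕ) : IsSortedSum lt (normRE lt E) := by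
  induction E with
  | zero => exact isSortedSum_zero
  | epsilon => exact isSortedSum_of_not_isUnion (e := one) (by simp [isUnion]) (by simp)
  | char n => exact isSortedSum_of_not_isUnion (e := letter n) (by simp [isUnion]) (by simp)
  | plus a b iha ihb => exact isSortedSum_nunion iha ihb
  | comp a b iha ihb => exact isSortedSum_ncat iha ihb
  | star a _ => exact isSortedSum_niter _

theorem cong_norm_eq (lt : NE → NE → Prop) [DecidableRel lt] [IsStrictTotalOrder NE lt]
    (E₁ E₂ : RegularExpression ℕ) (h : Cong E₁ E₂) :
    normRE lt E₁ = normRE lt E₂ := by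
  have hE := isSortedSum_normRE lt
  induction h with
  | refl => rfl
  | symm _ ih => exact ih.symm
  | trans _ _ ih₁ ih₂ => exact ih₁.trans ih₂
  | plus_congr _ _ ih₁ ih₂ => simp only [normRE, ih₁, ih₂]
  | comp_congr _ _ ih₁ ih₂ => simp only [normRE, ih₁, ih₂]
  | star_congr _ ih => simp only [normRE, ih]
  | plus_idem e => exact nunion_self (hE e)
  | zero_plus e => exact zero_nunion (hE e)
  | plus_zero e => exact nunion_zero (hE e)
  | zero_comp => exact zero_ncat _
  | comp_zero => exact ncat_zero _
  | one_comp => exact one_ncat _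
  | comp_one => exact ncat_one _
  | plus_assoc a b c => exact nunion_assoc (hE a) (hE b) (hE c)
  | plus_comm => exact nunion_comm _ _
  | comp_assoc => exact (ncat_assoc _ _ _).symm
  | zero_star | one_star => rfl
  | star_star => exact niter_niter _
end

section
/- Soundness of the first lifting rule: if every letter occurring in a regular expression E also belongs, as a one-letter string, to the language L(E), then L(E*) = L((x₁ + x₂ + ... + x_ℓ)*), where {x₁, ..., x_ℓ} is the set of letters occurring in E. -/
open RegularExpression

/-- `letters E` is the set 𝒜(E) of letters occurring syntactically in `E`. -/
def letters {α : Type*} [DecidableEq α] : RegularExpression α → Finset α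
  | RegularExpression.zero => ∅
  | RegularExpression.epsilon => ∅
  | RegularExpression.char a => {a}
  | RegularExpression.plus a b => letters a ∪ letters b
  | RegularExpression.comp a b => letters a ∪ letters b
  | RegularExpression.star a => letters a

/-- The regular expression `x₁ + x₂ + ... + x_ℓ` built from a list of letters. -/
def sumChars {α : Type*} : List α → RegularExpression α :=
  fun l => (l.map RegularExpression.char).foldr RegularExpression.plus RegularExpression.zero

/-!
Every word of `L(E)` is spelled with letters of 𝒜(E), so `L(E*) ⊆ 𝒜(E)*`; conversely every
letter of 𝒜(E) is itself a word of `L(E)`, so each word over 𝒜(E) is a concatenation of words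
of `L(E)`. Both `E` and `x₁ + ... + x_ℓ` satisfy these two properties for the same set of
letters, so their stars denote the same language.
-/

open scoped Computability

namespace Language

variable {α : Type*}

theorem kstar_eq_setOf_forall_mem {L : Language α} {S : Set α}
    (hLS : ∀ w ∈ L, ∀ a ∈ w, a ∈ S) (hSL : ∀ a ∈ S, [a] ∈ L) :
    L∗ = {w | ∀ a ∈ w, a ∈ S} := by
  ext w
  rw [mem_kstar]
  constructor
  · rintro ⟨ws, rfl, hws⟩ a ha
    obtain ⟨u, hu, hau⟩ := List.mem_flatten.mp ha
    exact hLS u (hws u hu) a hau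
  · intro hw
    have flatten_singletons : ∀ v : List α, (v.map fun a => [a]).flatten = v := by
      intro v
      induction v <;> simp_all
    refine ⟨w.map fun a => [a], (flatten_singletons w).symm, ?_⟩
    simp only [List.mem_map]
    rintro _ ⟨a, ha, rfl⟩
    exact hSL a (hw a ha)

end Language

theorem mem_matches'_sumChars {α : Type*} {l w : List α} :
    w ∈ (sumChars l).matches' ↔ ∃ x ∈ l, w = [x] := by
  induction l with
  | nil => simp [sumChars, matches']
  | cons a t ih =>
    change w ∈ (char a + sumChars t).matches' ↔ _
    rw [matches'_add, Language.mem_add, ih, matches'_char, List.exists_mem_cons_iff]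
    rfl

theorem mem_letters_of_mem_matches' {α : Type*} [DecidableEq α] {E : RegularExpression α}
    {w : List α} (hw : w ∈ E.matches') {a : α} (ha : a ∈ w) : a ∈ letters E := by
  induction E generalizing w with
  | zero => exact absurd hw id
  | epsilon => cases (Language.mem_one w).mp hw; cases ha
  | char c => cases (hw : w = [c]); simpa [letters] using ha
  | plus P Q ihP ihQ =>
    rcases (Language.mem_add _ _ w).mp hw with h | h
    · exact Finset.mem_union_left _ (ihP h ha)
    · exact Finset.mem_union_right _ (ihQ h ha)
  | comp P Q ihP ihQ =>
    obtain ⟨u, hu, v, hv, rfl⟩ := Language.mem_mul.mp hw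
    rcases List.mem_append.mp ha with h | h
    · exact Finset.mem_union_left _ (ihP hu h)
    · exact Finset.mem_union_right _ (ihQ hv h)
  | star P ih =>
    obtain ⟨ws, rfl, hws⟩ := Language.mem_kstar.mp hw
    obtain ⟨u, hu, hau⟩ := List.mem_flatten.mp ha
    exact ih (hws u hu) hau

theorem lifting_rule_one_general {α : Type*} [DecidableEq α]
    (E : RegularExpression α) (l : List α)
    (hA : ∀ x : α, x ∈ letters E ↔ [x] ∈ E.matches')
    (hl : ∀ x : α, x ∈ l ↔ x ∈ letters E) :
    E.star.matches' = (sumChars l).star.matches' := by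
  rw [matches'_star, matches'_star,
    Language.kstar_eq_setOf_forall_mem (S := ↑(letters E))
      (fun _ hw _ ha => mem_letters_of_mem_matches' hw ha) (fun x hx => (hA x).mp hx),
    Language.kstar_eq_setOf_forall_mem (S := ↑(letters E))
      (fun _ hw _ ha => by
        obtain ⟨x, hx, rfl⟩ := mem_matches'_sumChars.mp hw
        exact (hl _).mp (List.mem_singleton.mp ha ▸ hx))
      (fun x hx => mem_matches'_sumChars.mpr ⟨x, (hl x).mpr hx, rfl⟩)]

/-- if 𝒜(E) = 𝒜₁(E) then `L(E*) = L((x₁ + ... + x_ℓ)*)`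
where `{x₁, ..., x_ℓ}` = 𝒜(E). -/
theorem lifting_rule_one {α : Type*} [Fintype α] [DecidableEq α]
    (E : RegularExpression α) (l : List α)
    (hA : ∀ x : α, x ∈ letters E ↔ [x] ∈ E.matches')
    (hl : ∀ x : α, x ∈ l ↔ x ∈ letters E) :
    E.star.matches' = (sumChars l).star.matches' :=
  lifting_rule_one_general E l hA hl
end
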